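/- arXiv:2411.19195 — 4 statements merged into one kernel-verified Lean document; each statement's English description precedes it below -/
import Mathlib

section
/- If f, g: Z_N^d → C are supported in sets E, F respectively, f̂(m) = ĝ(m) for all m ∉ S, |E|·|S| < N^d/2, and |F|·|S| < N^d/2, then f = g. In other words, a signal supported on a set E with |E|·|S| < N^d/2 is uniquely determined by its Fourier coefficients outside S among all signals supported on sets of size at most |E|. -/
open Finset

noncomputable def ft {N d : ℕ} [NeZero N] (f : (Fin d → ZMod N) → ℂ) (m : Fin d → ZMod N) : ℂ :=
  ((N : ℂ) ^ d)⁻¹ * ∑ x : Fin d → ZMod N,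
    Complex.exp (-(2 * Real.pi * Complex.I * ((∑ i, x i * m i).val : ℂ) / N)) * f x

noncomputable def ch {N d : ℕ} (x m : Fin d → ZMod N) : ℂ :=
  Complex.exp (2 * Real.pi * Complex.I * ((∑ i, x i * m i).val : ℂ) / N)


noncomputable def ee {N : ℕ} (a : ZMod N) : ℂ :=
  Complex.exp (2 * Real.pi * Complex.I * (a.val : ℂ) / N)

lemma ee_zero {N : ℕ} [NeZero N] : ee (0 : ZMod N) = 1 := by
  simp [ee]

lemma ee_add {N : ℕ} [NeZero N] (a b : ZMod N) : ee (a + b) = ee a * ee b := by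
  have hN : (N : ℂ) ≠ 0 := Nat.cast_ne_zero.2 (NeZero.ne N)
  set c : ℂ := 2 * Real.pi * Complex.I with hc
  set q := (a.val + b.val) / N with hq
  set r := (a.val + b.val) % N with hr
  have hdm : N * q + r = a.val + b.val := Nat.div_add_mod _ _
  have h1 : (a.val : ℂ) + (b.val : ℂ) = (N : ℂ) * q + r := by exact_mod_cast hdm.symm
  rw [ee, ee, ee, ZMod.val_add, ← hr, ← hc, ← Complex.exp_add]
  rw [← add_div, ← mul_add, h1,
    show c * ((N : ℂ) * q + r) = c * (r : ℂ) + ((q : ℤ) : ℂ) * c * (N : ℂ) by push_cast; ring,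
    add_div, mul_div_cancel_right₀ (((q : ℤ) : ℂ) * c) hN,
    Complex.exp_add, Complex.exp_int_mul_two_pi_mul_I, mul_one]

lemma ee_neg {N : ℕ} [NeZero N] (a : ZMod N) : ee (-a) = (ee a)⁻¹ :=
  eq_inv_of_mul_eq_one_right (by rw [← ee_add]; simp [ee_zero])

lemma ee_ne_one {N : ℕ} [NeZero N] {a : ZMod N} (ha : a ≠ 0) : ee a ≠ 1 := by
  intro h
  rw [ee, Complex.exp_eq_one_iff] at h
  obtain ⟨n, hn⟩ := h
  have hN : (N : ℂ) ≠ 0 := Nat.cast_ne_zero.2 (NeZero.ne N)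
  have h2pi : (2 : ℂ) * Real.pi * Complex.I ≠ 0 := by
    simp [Real.pi_ne_zero, Complex.I_ne_zero]
  rw [div_eq_iff hN] at hn
  have hval : ((a.val : ℤ) : ℂ) = ((n * N : ℤ) : ℂ) := by
    have := mul_left_cancel₀ h2pi (show (2:ℂ) * Real.pi * Complex.I * (a.val:ℂ)
        = 2 * Real.pi * Complex.I * ((n:ℂ) * N) by linear_combination hn)
    push_cast
    linear_combination this
  have hz : (a.val : ℤ) = n * N := Int.cast_injective hval
  have hpos : 0 < a.val := Nat.pos_of_ne_zero (fun h0 => ha (ZMod.val_eq_zero a |>.mp h0))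
  have hlt : a.val < N := ZMod.val_lt a
  have hdvd : (N : ℤ) ∣ (a.val : ℤ) := ⟨n, by linarith [hz]⟩
  have := Int.le_of_dvd (by exact_mod_cast hpos) hdvd
  omega


lemma sum_ee {N : ℕ} [NeZero N] (z : ZMod N) :
    ∑ a : ZMod N, ee (z * a) = if z = 0 then (N : ℂ) else 0 := by
  rcases eq_or_ne z 0 with rfl | hz
  · simp [ee_zero, Finset.card_univ, ZMod.card]
  · rw [if_neg hz]
    have hshift : ∑ a : ZMod N, ee (z * (a + 1)) = ∑ a : ZMod N, ee (z * a) :=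
      Fintype.sum_equiv (Equiv.addRight (1 : ZMod N)) _ _ (fun a => rfl)
    have hexp : ∀ a : ZMod N, ee (z * (a + 1)) = ee (z * a) * ee z := by
      intro a; rw [mul_add, mul_one, ee_add]
    rw [Finset.sum_congr rfl (fun a _ => hexp a), ← Finset.sum_mul] at hshift
    have h0 : (∑ a : ZMod N, ee (z * a)) * (ee z - 1) = 0 := by
      rw [mul_sub, mul_one, hshift, sub_self]
    rcases mul_eq_zero.mp h0 with h | h
    · exact h
    · exact absurd (sub_eq_zero.mp h) (ee_ne_one hz)

lemma ee_sum {N : ℕ} [NeZero N] {ι : Type*} (s : Finset ι) (v : ι → ZMod N) :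
    ee (∑ i ∈ s, v i) = ∏ i ∈ s, ee (v i) := by
  induction s using Finset.cons_induction with
  | empty => simp [ee_zero]
  | cons i s hi ih => rw [Finset.sum_cons, Finset.prod_cons, ee_add, ih]

lemma orth {N d : ℕ} [NeZero N] (z : Fin d → ZMod N) :
    ∑ m : Fin d → ZMod N, ee (∑ i, z i * m i) = if z = 0 then ((N : ℂ)) ^ d else 0 := by
  have h1 : ∀ m : Fin d → ZMod N, ee (∑ i, z i * m i) = ∏ i, ee (z i * m i) :=
    fun m => ee_sum _ _
  rw [Finset.sum_congr rfl (fun m _ => h1 m)]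
  have h2 : ∑ m : Fin d → ZMod N, ∏ i, ee (z i * m i)
      = ∏ i : Fin d, ∑ a : ZMod N, ee (z i * a) := by
    rw [Finset.prod_univ_sum, Fintype.piFinset_univ]
  rw [h2, Finset.prod_congr rfl (fun i _ => sum_ee (z i))]
  rcases eq_or_ne z 0 with rfl | hz
  · simp
  · rw [if_neg hz]
    obtain ⟨i, hi⟩ : ∃ i, z i ≠ 0 := by
      by_contra hcon
      push_neg at hcon
      exact hz (funext hcon)
    exact Finset.prod_eq_zero (Finset.mem_univ i) (by rw [if_neg hi])

lemma ch_eq {N d : ℕ} [NeZero N] (x m : Fin d → ZMod N) : ch x m = ee (∑ i, x i * m i) := rfl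

lemma ft_eq {N d : ℕ} [NeZero N] (f : (Fin d → ZMod N) → ℂ) (m : Fin d → ZMod N) :
    ft f m = ((N : ℂ) ^ d)⁻¹ * ∑ x : Fin d → ZMod N, (ee (∑ i, x i * m i))⁻¹ * f x := by
  simp only [ft, Complex.exp_neg, ee]

lemma inv_sum {N d : ℕ} [NeZero N] (h : (Fin d → ZMod N) → ℂ) (x : Fin d → ZMod N) :
    ∑ m : Fin d → ZMod N, ft h m * ch x m = h x := by
  have hNd : ((N : ℂ)) ^ d ≠ 0 := pow_ne_zero _ (Nat.cast_ne_zero.2 (NeZero.ne N))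
  calc ∑ m : Fin d → ZMod N, ft h m * ch x m
      = ((N : ℂ) ^ d)⁻¹ * ∑ m : Fin d → ZMod N, ∑ y : Fin d → ZMod N,
          ((ee (∑ i, y i * m i))⁻¹ * h y) * ee (∑ i, x i * m i) := by
        rw [Finset.mul_sum]
        refine Finset.sum_congr rfl fun m _ => ?_
        rw [ft_eq, ch_eq, mul_assoc, Finset.sum_mul]
    _ = ((N : ℂ) ^ d)⁻¹ * ∑ y : Fin d → ZMod N,
          h y * ∑ m : Fin d → ZMod N, ee (∑ i, (x - y) i * m i) := by
        congr 1
        rw [Finset.sum_comm]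
        refine Finset.sum_congr rfl fun y _ => ?_
        rw [Finset.mul_sum]
        refine Finset.sum_congr rfl fun m _ => ?_
        have key : ee (∑ i, (x - y) i * m i)
            = ee (∑ i, x i * m i) * (ee (∑ i, y i * m i))⁻¹ := by
          rw [← ee_neg, ← ee_add, ← sub_eq_add_neg, ← Finset.sum_sub_distrib]
          congr 1
          refine Finset.sum_congr rfl fun i _ => ?_
          rw [Pi.sub_apply, sub_mul]
        rw [key]; ring
    _ = ((N : ℂ) ^ d)⁻¹ * (h x * (N : ℂ) ^ d) := by
        congr 1
        rw [Finset.sum_eq_single x]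
        · rw [orth, if_pos (sub_self x)]
        · intro y _ hy
          rw [orth, if_neg (fun hc => hy (sub_eq_zero.mp hc).symm), mul_zero]
        · intro hx; exact absurd (Finset.mem_univ x) hx
    _ = h x := by field_simp

lemma norm_ch {N d : ℕ} [NeZero N] (x m : Fin d → ZMod N) : ‖ch x m‖ = 1 := by
  rw [ch, show (2 * Real.pi * Complex.I * (((∑ i, x i * m i).val : ℕ) : ℂ) / N)
      = ((2 * Real.pi * ((∑ i, x i * m i).val : ℕ) / N : ℝ) : ℂ) * Complex.I by push_cast; ring,
    Complex.norm_exp_ofReal_mul_I]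

lemma norm_exp_neg {N : ℕ} [NeZero N] (v : ℕ) :
    ‖Complex.exp (-(2 * Real.pi * Complex.I * (v : ℂ) / N))‖ = 1 := by
  rw [show -(2 * Real.pi * Complex.I * (v : ℂ) / N)
      = ((-(2 * Real.pi * v / N) : ℝ) : ℂ) * Complex.I by push_cast; ring,
    Complex.norm_exp_ofReal_mul_I]

theorem stmt1 {N d : ℕ} [NeZero N] (f g : (Fin d → ZMod N) → ℂ)
    (E F S : Finset (Fin d → ZMod N))
    (hE : ∀ x ∉ E, f x = 0) (hF : ∀ x ∉ F, g x = 0)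
    (hS : ∀ m ∉ S, ft f m = ft g m)
    (h1 : ((E.card : ℝ) * S.card) < (N : ℝ) ^ d / 2)
    (h2 : ((F.card : ℝ) * S.card) < (N : ℝ) ^ d / 2) : f = g := by
  set h : (Fin d → ZMod N) → ℂ := fun x => f x - g x with hh
  suffices hzero : ∀ x, h x = 0 by
    funext x
    have := hzero x
    rw [hh] at this
    exact sub_eq_zero.mp this
  by_contra hcon
  push_neg at hcon
  obtain ⟨x1, hx1⟩ := hcon
  obtain ⟨x0, -, hx0⟩ := Finset.exists_max_image (Finset.univ : Finset (Fin d → ZMod N))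
    (fun x => ‖h x‖) ⟨x1, Finset.mem_univ x1⟩
  set M := ‖h x0‖ with hM'
  have hM : 0 < M := lt_of_lt_of_le (norm_pos_iff.mpr hx1) (hx0 x1 (Finset.mem_univ _))
  have hNd : (0 : ℝ) < (N : ℝ) ^ d :=
    pow_pos (by exact_mod_cast Nat.pos_of_ne_zero (NeZero.ne N)) d
  have hft : ∀ m, ft h m = ft f m - ft g m := by
    intro m
    simp only [ft, hh, ← mul_sub, ← Finset.sum_sub_distrib]
  have hftS : ∀ m ∉ S, ft h m = 0 := fun m hm => by rw [hft, hS m hm, sub_self]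
  -- support bound on h
  have hsupp : ∀ x ∉ E ∪ F, h x = 0 := by
    intro x hx
    rw [Finset.mem_union] at hx
    push_neg at hx
    rw [hh]
    simp only
    rw [hE x hx.1, hF x hx.2, sub_self]
  -- bound on each Fourier coefficient
  have hcoef : ∀ m, ‖ft h m‖ ≤ ((N : ℝ) ^ d)⁻¹ * (((E.card : ℝ) + F.card) * M) := by
    intro m
    rw [ft, norm_mul]
    have hc : ‖((N : ℂ) ^ d)⁻¹‖ = ((N : ℝ) ^ d)⁻¹ := by
      rw [norm_inv, norm_pow, Complex.norm_natCast]
    rw [hc]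
    have hbound : ‖∑ x : Fin d → ZMod N,
        Complex.exp (-(2 * Real.pi * Complex.I * (((∑ i, x i * m i).val : ℕ) : ℂ) / N)) * h x‖
        ≤ ((E.card : ℝ) + F.card) * M := by
      calc ‖∑ x : Fin d → ZMod N,
            Complex.exp (-(2 * Real.pi * Complex.I * (((∑ i, x i * m i).val : ℕ) : ℂ) / N)) * h x‖
          ≤ ∑ x : Fin d → ZMod N, ‖Complex.exp
              (-(2 * Real.pi * Complex.I * (((∑ i, x i * m i).val : ℕ) : ℂ) / N)) * h x‖ :=
            norm_sum_le _ _
        _ = ∑ x : Fin d → ZMod N, ‖h x‖ := by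
            refine Finset.sum_congr rfl fun x _ => ?_
            rw [norm_mul, norm_exp_neg, one_mul]
        _ = ∑ x ∈ E ∪ F, ‖h x‖ := by
            refine (Finset.sum_subset (Finset.subset_univ (E ∪ F)) fun x _ hx => ?_).symm
            rw [hsupp x hx, norm_zero]
        _ ≤ (E ∪ F).card • M :=
            Finset.sum_le_card_nsmul _ _ M fun x _ => hx0 x (Finset.mem_univ x)
        _ ≤ ((E.card : ℝ) + F.card) * M := by
            rw [nsmul_eq_mul]
            have : ((E ∪ F).card : ℝ) ≤ (E.card : ℝ) + F.card := by
              exact_mod_cast Finset.card_union_le E F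
            exact mul_le_mul_of_nonneg_right this hM.le
    exact mul_le_mul_of_nonneg_left hbound (by positivity)
  -- main inequality
  have hrep : h x0 = ∑ m ∈ S, ft h m * ch x0 m := by
    rw [Finset.sum_subset (Finset.subset_univ S) fun m _ hm => by rw [hftS m hm, zero_mul]]
    exact (inv_sum h x0).symm
  have key : M ≤ (S.card : ℝ) * (((N : ℝ) ^ d)⁻¹ * (((E.card : ℝ) + F.card) * M)) := by
    calc M = ‖∑ m ∈ S, ft h m * ch x0 m‖ := by rw [hM', hrep]
      _ ≤ ∑ m ∈ S, ‖ft h m * ch x0 m‖ := norm_sum_le _ _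
      _ = ∑ m ∈ S, ‖ft h m‖ := by
          refine Finset.sum_congr rfl fun m _ => ?_
          rw [norm_mul, norm_ch, mul_one]
      _ ≤ S.card • (((N : ℝ) ^ d)⁻¹ * (((E.card : ℝ) + F.card) * M)) :=
          Finset.sum_le_card_nsmul _ _ _ fun m _ => hcoef m
      _ = (S.card : ℝ) * (((N : ℝ) ^ d)⁻¹ * (((E.card : ℝ) + F.card) * M)) := nsmul_eq_mul _ _
  have hlt : ((E.card : ℝ) + F.card) * S.card < (N : ℝ) ^ d := by nlinarith
  have hfin : (S.card : ℝ) * (((N : ℝ) ^ d)⁻¹ * (((E.card : ℝ) + F.card) * M)) < M := by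
    have hstep : ((E.card : ℝ) + F.card) * S.card * M < (N : ℝ) ^ d * M :=
      mul_lt_mul_of_pos_right hlt hM
    calc (S.card : ℝ) * (((N : ℝ) ^ d)⁻¹ * (((E.card : ℝ) + F.card) * M))
        = ((E.card : ℝ) + F.card) * S.card * M * ((N : ℝ) ^ d)⁻¹ := by ring
      _ < (N : ℝ) ^ d * M * ((N : ℝ) ^ d)⁻¹ :=
          mul_lt_mul_of_pos_right hstep (inv_pos.mpr hNd)
      _ = M := by field_simp
  linarith
end

section
/- Let f = Σ_{i=1}^γ a_i·1_{A_i} be a nonzero Dirac comb on Z_N^d with f̂ supported in Σ, and suppose A_1 satisfies Σ_{x ∈ Z_N^d} |f(x)| ≤ γ · Σ_{x ∈ A_1} |f(x)| (1-effective support). Then |A_1|·|Σ| ≥ N^d/γ. -/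
open Finset

section aux
variable {N : ℕ} [NeZero N]

noncomputable def zeta (N : ℕ) : ℂ := Complex.exp (2 * Real.pi * Complex.I / N)

lemma zeta_pow_N : zeta N ^ N = 1 :=
  (Complex.isPrimitiveRoot_exp N (NeZero.ne N)).pow_eq_one

noncomputable def E (t : ZMod N) : ℂ := zeta N ^ t.val

lemma E_exp (t : ZMod N) :
    E t = Complex.exp (2 * Real.pi * Complex.I * (t.val : ℂ) / N) := by
  unfold E zeta
  rw [← Complex.exp_nat_mul]
  congr 1
  ring

lemma E_zero : E (0 : ZMod N) = 1 := by simp [E, ZMod.val_zero]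

lemma E_add (s t : ZMod N) : E (s + t) = E s * E t := by
  unfold E
  rw [ZMod.val_add, ← pow_eq_pow_mod _ zeta_pow_N, pow_add]

lemma E_neg (t : ZMod N) : E (-t) = (E t)⁻¹ := by
  have h : E t * E (-t) = 1 := by rw [← E_add]; simp [E_zero]
  exact eq_inv_of_mul_eq_one_left (by rw [mul_comm] at h; exact h)

lemma norm_zeta : ‖zeta N‖ = 1 := by
  have h : ‖zeta N‖ ^ N = 1 := by
    rw [← norm_pow, zeta_pow_N, norm_one]
  rcases lt_trichotomy (‖zeta N‖) 1 with hlt | heq | hgt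
  · exact absurd h (by
      have := pow_lt_one₀ (norm_nonneg _) hlt (NeZero.ne N)
      linarith)
  · exact heq
  · exact absurd h (by
      have := one_lt_pow₀ hgt (NeZero.ne N)
      linarith)

lemma norm_E (t : ZMod N) : ‖E t‖ = 1 := by
  rw [E, norm_pow, norm_zeta, one_pow]

lemma E_sum {ι : Type*} (s : Finset ι) (g : ι → ZMod N) :
    E (∑ i ∈ s, g i) = ∏ i ∈ s, E (g i) := by
  induction s using Finset.cons_induction with
  | empty => simp [E_zero]
  | cons a s ha ih => rw [Finset.sum_cons, Finset.prod_cons, E_add, ih]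

lemma sum_val_pow (w : ℂ) : ∑ t : ZMod N, w ^ t.val = ∑ k ∈ Finset.range N, w ^ k := by
  apply Finset.sum_nbij' (i := fun t : ZMod N => t.val) (j := fun k : ℕ => (k : ZMod N))
  · intro a _; exact Finset.mem_range.mpr (ZMod.val_lt a)
  · intro b _; exact Finset.mem_univ _
  · intro a _; exact ZMod.natCast_rightInverse a
  · intro b hb; exact ZMod.val_cast_of_lt (Finset.mem_range.mp hb)
  · intro a _; rfl

lemma E_orth (u : ZMod N) : ∑ t : ZMod N, E (u * t) = if u = 0 then (N : ℂ) else 0 := by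
  split_ifs with h
  · subst h
    simp [E_zero, Finset.card_univ, ZMod.card]
  · have hterm : ∀ t : ZMod N, E (u * t) = (zeta N ^ u.val) ^ t.val := by
      intro t
      unfold E
      rw [ZMod.val_mul, ← pow_eq_pow_mod _ zeta_pow_N, pow_mul]
    rw [Finset.sum_congr rfl fun t _ => hterm t, sum_val_pow]
    have hw1 : zeta N ^ u.val ≠ 1 := by
      refine (Complex.isPrimitiveRoot_exp N (NeZero.ne N)).pow_ne_one_of_pos_of_lt ?_ (ZMod.val_lt u)
      exact fun hv => h ((ZMod.val_eq_zero u).mp hv)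
    rw [geom_sum_eq hw1, ← pow_mul, mul_comm u.val N, pow_mul, zeta_pow_N, one_pow]
    simp

lemma E_orth_multi {d : ℕ} (u : Fin d → ZMod N) :
    ∑ m : Fin d → ZMod N, ∏ i, E (u i * m i) = if u = 0 then ((N : ℂ)) ^ d else 0 := by
  rw [← Fintype.piFinset_univ,
    ← Finset.prod_univ_sum (fun _ : Fin d => (Finset.univ : Finset (ZMod N)))
      (fun i t => E (u i * t))]
  rw [Finset.prod_congr rfl fun i _ => E_orth (u i)]
  by_cases h : u = 0
  · rw [if_pos h, Finset.prod_congr rfl fun i (_ : i ∈ Finset.univ) =>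
      if_pos (show u i = 0 by rw [h]; rfl), Finset.prod_const, Finset.card_univ,
      Fintype.card_fin]
  · rw [if_neg h]
    obtain ⟨i, hi⟩ := Function.ne_iff.mp h
    exact Finset.prod_eq_zero (Finset.mem_univ i) (if_neg hi)

lemma inversion {d : ℕ} (f : (Fin d → ZMod N) → ℂ) (x : Fin d → ZMod N) :
    ∑ m : Fin d → ZMod N, ch x m * ft f m = f x := by
  have hNd : ((N : ℂ) ^ d) ≠ 0 := by
    exact pow_ne_zero d (Nat.cast_ne_zero.mpr (NeZero.ne N))
  have key : ∀ m y : Fin d → ZMod N,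
      ch x m * (Complex.exp (-(2 * Real.pi * Complex.I * ((∑ i, y i * m i).val : ℂ) / N)) * f y)
      = (∏ i, E ((x i - y i) * m i)) * f y := by
    intro m y
    have h1 : ch x m = E (∑ i, x i * m i) := by rw [ch, E_exp]
    have h2 : Complex.exp (-(2 * Real.pi * Complex.I * ((∑ i, y i * m i).val : ℂ) / N))
        = E (-∑ i, y i * m i) := by
      rw [E_neg, E_exp, ← Complex.exp_neg]
    rw [h1, h2, ← mul_assoc, ← E_add, ← Finset.sum_neg_distrib, ← Finset.sum_add_distrib,
      E_sum]
    congr 1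
    refine Finset.prod_congr rfl fun i _ => ?_
    congr 1
    ring
  calc ∑ m : Fin d → ZMod N, ch x m * ft f m
      = ∑ m : Fin d → ZMod N, ∑ y : Fin d → ZMod N,
          ((N : ℂ) ^ d)⁻¹ * ((∏ i, E ((x i - y i) * m i)) * f y) := by
        refine Finset.sum_congr rfl fun m _ => ?_
        rw [ft, Finset.mul_sum, Finset.mul_sum]
        refine Finset.sum_congr rfl fun y _ => ?_
        rw [mul_left_comm, key m y]
    _ = ∑ y : Fin d → ZMod N, ∑ m : Fin d → ZMod N,
          ((N : ℂ) ^ d)⁻¹ * ((∏ i, E ((x i - y i) * m i)) * f y) := Finset.sum_comm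
    _ = ∑ y : Fin d → ZMod N,
          ((N : ℂ) ^ d)⁻¹ * ((∑ m : Fin d → ZMod N, ∏ i, E ((x i - y i) * m i)) * f y) := by
        refine Finset.sum_congr rfl fun y _ => ?_
        rw [← Finset.mul_sum, ← Finset.sum_mul]
    _ = f x := by
        have hval : ∀ y : Fin d → ZMod N,
            (∑ m : Fin d → ZMod N, ∏ i, E ((x i - y i) * m i))
            = if y = x then ((N : ℂ)) ^ d else 0 := by
          intro y
          rw [E_orth_multi (fun i => x i - y i)]
          congr 1
          simp only [funext_iff, Pi.zero_apply, sub_eq_zero, eq_iff_iff]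
          exact ⟨fun h i => (h i).symm, fun h i => (h i).symm⟩
        simp_rw [hval]
        rw [Finset.sum_eq_single x]
        · rw [if_pos rfl, ← mul_assoc, inv_mul_cancel₀ hNd, one_mul]
        · intro y _ hy; rw [if_neg hy, zero_mul, mul_zero]
        · intro h; exact absurd (Finset.mem_univ x) h

end aux

theorem stmt8 {N d γ : ℕ} [NeZero N] (hγ : 0 < γ)
    (a : Fin γ → ℂ) (A : Fin γ → Finset (Fin d → ZMod N))
    (hdisj : ∀ i j, i ≠ j → Disjoint (A i) (A j))
    (f : (Fin d → ZMod N) → ℂ)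
    (hf : ∀ x, f x = ∑ i, if x ∈ A i then a i else 0)
    (hne : f ≠ 0)
    (Sig : Finset (Fin d → ZMod N)) (hSig : ∀ m ∉ Sig, ft f m = 0)
    (heff : ∑ x : Fin d → ZMod N, ‖f x‖ ≤ (γ : ℝ) * ∑ x ∈ A ⟨0, hγ⟩, ‖f x‖) :
    (N : ℝ) ^ d / γ ≤ ((A ⟨0, hγ⟩).card : ℝ) * Sig.card := by
  classical
  have hNpos : (0 : ℝ) < (N : ℝ) ^ d := by
    have : (0 : ℝ) < (N : ℝ) := Nat.cast_pos.mpr (Nat.pos_of_ne_zero (NeZero.ne N))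
    positivity
  obtain ⟨x0, -, hx0⟩ := Finset.exists_max_image (Finset.univ : Finset (Fin d → ZMod N))
    (fun x => ‖f x‖) ⟨fun _ => 0, Finset.mem_univ _⟩
  set M := ‖f x0‖ with hMdef
  have hM0 : 0 < M := by
    obtain ⟨x1, hx1⟩ := Function.ne_iff.mp hne
    exact lt_of_lt_of_le (norm_pos_iff.mpr hx1) (hx0 x1 (Finset.mem_univ _))
  -- bound for ft
  have hft : ∀ m, ‖ft f m‖ ≤ ((N : ℝ) ^ d)⁻¹ * ∑ x : Fin d → ZMod N, ‖f x‖ := by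
    intro m
    rw [ft, norm_mul]
    have h1 : ‖((N : ℂ) ^ d)⁻¹‖ = ((N : ℝ) ^ d)⁻¹ := by
      rw [norm_inv, norm_pow, Complex.norm_natCast]
    rw [h1]
    gcongr
    refine (norm_sum_le _ _).trans ?_
    refine Finset.sum_le_sum fun x _ => ?_
    rw [norm_mul]
    have : Complex.exp (-(2 * Real.pi * Complex.I * ((∑ i, x i * m i).val : ℂ) / N))
        = E (-∑ i, x i * m i) := by
      rw [E_neg, E_exp, ← Complex.exp_neg]
    rw [this, norm_E, one_mul]
  -- sup bound
  have hsup : M ≤ (Sig.card : ℝ) * (((N : ℝ) ^ d)⁻¹ * ∑ x : Fin d → ZMod N, ‖f x‖) := by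
    have h1 : f x0 = ∑ m ∈ Sig, ch x0 m * ft f m := by
      rw [← inversion f x0]
      exact (Finset.sum_subset (Finset.subset_univ Sig)
        (fun m _ hm => by rw [hSig m hm, mul_zero])).symm
    calc M = ‖∑ m ∈ Sig, ch x0 m * ft f m‖ := by rw [hMdef, h1]
      _ ≤ ∑ m ∈ Sig, ‖ch x0 m * ft f m‖ := norm_sum_le _ _
      _ ≤ ∑ m ∈ Sig, ((N : ℝ) ^ d)⁻¹ * ∑ x : Fin d → ZMod N, ‖f x‖ := by
          refine Finset.sum_le_sum fun m _ => ?_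
          rw [norm_mul]
          have hch : ‖ch x0 m‖ = 1 := by rw [ch, ← E_exp, norm_E]
          rw [hch, one_mul]
          exact hft m
      _ = (Sig.card : ℝ) * (((N : ℝ) ^ d)⁻¹ * ∑ x : Fin d → ZMod N, ‖f x‖) := by
          simp [Finset.sum_const, nsmul_eq_mul]
  -- effective support
  have h2 : ∑ x : Fin d → ZMod N, ‖f x‖ ≤ (γ : ℝ) * (((A ⟨0, hγ⟩).card : ℝ) * M) := by
    refine heff.trans ?_
    gcongr
    calc ∑ x ∈ A ⟨0, hγ⟩, ‖f x‖ ≤ ∑ _x ∈ A ⟨0, hγ⟩, M :=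
          Finset.sum_le_sum fun x _ => hx0 x (Finset.mem_univ _)
      _ = ((A ⟨0, hγ⟩).card : ℝ) * M := by rw [Finset.sum_const, nsmul_eq_mul]
  -- combine
  have hchain : (N : ℝ) ^ d * M
      ≤ (Sig.card : ℝ) * ((γ : ℝ) * (((A ⟨0, hγ⟩).card : ℝ) * M)) := by
    have h3 : M ≤ (Sig.card : ℝ) * (((N : ℝ) ^ d)⁻¹ * ((γ : ℝ) * (((A ⟨0, hγ⟩).card : ℝ) * M))) := by
      refine hsup.trans ?_
      gcongr
    calc (N : ℝ) ^ d * M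
        ≤ (N : ℝ) ^ d * ((Sig.card : ℝ) * (((N : ℝ) ^ d)⁻¹ *
            ((γ : ℝ) * (((A ⟨0, hγ⟩).card : ℝ) * M)))) := by gcongr
      _ = (Sig.card : ℝ) * ((γ : ℝ) * (((A ⟨0, hγ⟩).card : ℝ) * M)) := by
          have hNne : ((N : ℝ) ^ d) ≠ 0 := ne_of_gt hNpos
          field_simp
  have hγR : (0 : ℝ) < (γ : ℝ) := Nat.cast_pos.mpr hγ
  rw [div_le_iff₀ hγR]
  nlinarith [hchain, hM0, hNpos]
end

section
/- Let f be a Dirac comb of complexity γ on Z_N^d with coefficients from a set {α_i} containing 0, with pairwise distances ≥ δ and moduli ≤ M. Suppose A_1 is the 2-effective support of f (so Σ_x |f(x)|² ≤ γ Σ_{x∈A_1} |f(x)|², with 2-effective mass |a_1|²|A_1| maximal among |a_i|²|A_i|). If the 2-effective mass of f is known, f̂(m) is known for all m ∉ S, and |A_1|·|S| < (N^d / (4(γ²+2γ)))·(δ/M)², then f is the unique Dirac comb of complexity γ with these parameters, the given 2-effective mass, and these Fourier coefficients outside S. Equivalently: if g is another such Dirac comb with |b_1|²|B_1| = |a_1|²|A_1|,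 ĝ = f̂ off S, and |B_1|·|S| < (N^d / (4(γ²+2γ)))·(δ/M)², then g = f. -/
open Finset

namespace Stmt10Aux

variable {N : ℕ} [NeZero N]

lemma stdAddChar_val (j : ZMod N) :
    ZMod.stdAddChar j = Complex.exp (2 * Real.pi * Complex.I * (j.val : ℂ) / N) := by
  rw [ZMod.stdAddChar_apply, ZMod.toCircle_apply]

lemma stdAddChar_neg_val (j : ZMod N) :
    ZMod.stdAddChar (-j) = Complex.exp (-(2 * Real.pi * Complex.I * (j.val : ℂ) / N)) := by
  have h1 : ZMod.stdAddChar (-j) * ZMod.stdAddChar j = 1 := by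
    rw [← AddChar.map_add_eq_mul]; simp
  have h2 : Complex.exp (-(2 * Real.pi * Complex.I * (j.val : ℂ) / N)) *
      Complex.exp (2 * Real.pi * Complex.I * (j.val : ℂ) / N) = 1 := by
    rw [← Complex.exp_add]; simp
  rw [stdAddChar_val j] at h1
  exact mul_right_cancel₀ (Complex.exp_ne_zero _) (h1.trans h2.symm)

lemma addChar_map_sum {ι : Type*} (ψ : AddChar (ZMod N) ℂ) (s : Finset ι) (f : ι → ZMod N) :
    ψ (∑ i ∈ s, f i) = ∏ i ∈ s, ψ (f i) := by
  induction s using Finset.cons_induction with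
  | empty => simp
  | cons i s hi ih => rw [Finset.sum_cons, Finset.prod_cons, AddChar.map_add_eq_mul, ih]

lemma sum_stdAddChar_mul (c : ZMod N) :
    ∑ k : ZMod N, ZMod.stdAddChar (c * k) = if c = 0 then (N : ℂ) else 0 := by
  classical
  have h : ∀ k : ZMod N, ZMod.stdAddChar (c * k) = (ZMod.stdAddChar.mulShift c) k :=
    fun k => rfl
  simp_rw [h]
  rw [AddChar.sum_eq_ite]
  by_cases hc : c = 0
  · subst hc
    rw [if_pos, if_pos rfl, ZMod.card]
    rw [AddChar.mulShift_zero, AddChar.one_eq_zero]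
  · rw [if_neg, if_neg hc]
    rw [← AddChar.one_eq_zero]
    exact ZMod.isPrimitive_stdAddChar N hc

variable {d : ℕ}

lemma sum_char_diag (x y : Fin d → ZMod N) :
    ∑ m : Fin d → ZMod N, ZMod.stdAddChar (∑ i, (x i - y i) * m i) =
      if x = y then (N : ℂ) ^ d else 0 := by
  classical
  have h1 : ∀ m : Fin d → ZMod N, ZMod.stdAddChar (∑ i, (x i - y i) * m i)
      = ∏ i, ZMod.stdAddChar ((x i - y i) * m i) := fun m => addChar_map_sum _ _ _
  simp_rw [h1]
  have hps := (Fintype.prod_sum (fun i (k : ZMod N) => ZMod.stdAddChar ((x i - y i) * k))).symm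
  rw [hps]
  by_cases hxy : x = y
  · subst hxy
    simp [sum_stdAddChar_mul]
  · rw [if_neg hxy]
    obtain ⟨i, hi⟩ : ∃ i, x i ≠ y i := by
      by_contra hcon
      push_neg at hcon
      exact hxy (funext hcon)
    refine Finset.prod_eq_zero (Finset.mem_univ i) ?_
    rw [sum_stdAddChar_mul, if_neg (sub_ne_zero.mpr hi)]

lemma inversion (h : (Fin d → ZMod N) → ℂ) (x : Fin d → ZMod N) :
    ∑ m : Fin d → ZMod N, ch x m * ft h m = h x := by
  classical
  have hNd : ((N : ℂ) ^ d) ≠ 0 := by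
    exact pow_ne_zero _ (Nat.cast_ne_zero.mpr (NeZero.ne N))
  have key : ∀ m y : Fin d → ZMod N,
      ch x m * (Complex.exp (-(2 * Real.pi * Complex.I * ((∑ i, y i * m i).val : ℂ) / N)) * h y)
      = ZMod.stdAddChar (∑ i, (x i - y i) * m i) * h y := by
    intro m y
    rw [ch, ← stdAddChar_val, ← stdAddChar_neg_val, ← mul_assoc, ← AddChar.map_add_eq_mul]
    congr 2
    rw [← Finset.sum_neg_distrib, ← Finset.sum_add_distrib]
    exact Finset.sum_congr rfl fun i _ => by ring
  calc ∑ m : Fin d → ZMod N, ch x m * ft h m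
      = ((N : ℂ) ^ d)⁻¹ * ∑ m : Fin d → ZMod N, ∑ y : Fin d → ZMod N,
          ZMod.stdAddChar (∑ i, (x i - y i) * m i) * h y := by
        rw [Finset.mul_sum]
        refine Finset.sum_congr rfl fun m _ => ?_
        rw [ft, mul_left_comm, Finset.mul_sum]
        congr 1
        exact Finset.sum_congr rfl fun y _ => key m y
    _ = ((N : ℂ) ^ d)⁻¹ * ∑ y : Fin d → ZMod N,
          (∑ m : Fin d → ZMod N, ZMod.stdAddChar (∑ i, (x i - y i) * m i)) * h y := by
        rw [Finset.sum_comm]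
        simp_rw [Finset.sum_mul]
    _ = h x := by
        simp_rw [sum_char_diag, ite_mul, zero_mul]
        rw [Finset.sum_ite_eq]
        simp [hNd]

end Stmt10Aux
set_option maxHeartbeats 1000000 in
theorem stmt10 {N d γ : ℕ} [NeZero N] (hγ : 0 < γ)
    (δ M : ℝ) (hδ : 0 < δ) (hM : 0 < M)
    (α : Set ℂ) (h0 : (0 : ℂ) ∈ α)
    (hsep : ∀ z ∈ α, ∀ w ∈ α, z ≠ w → δ ≤ ‖z - w‖)
    (hbd : ∀ z ∈ α, ‖z‖ ≤ M)
    (a b : Fin γ → ℂ) (A B : Fin γ → Finset (Fin d → ZMod N))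
    (ha : ∀ i, a i ∈ α) (hb : ∀ j, b j ∈ α)
    (hA : ∀ i j, i ≠ j → Disjoint (A i) (A j))
    (hB : ∀ i j, i ≠ j → Disjoint (B i) (B j))
    (f g : (Fin d → ZMod N) → ℂ)
    (hf : ∀ x, f x = ∑ i, if x ∈ A i then a i else 0)
    (hg : ∀ x, g x = ∑ j, if x ∈ B j then b j else 0)
    (heffA : ∀ i, ‖a i‖ ^ 2 * ((A i).card : ℝ) ≤ ‖a ⟨0, hγ⟩‖ ^ 2 * ((A ⟨0, hγ⟩).card : ℝ))
    (heffB : ∀ j, ‖b j‖ ^ 2 * ((B j).card : ℝ) ≤ ‖b ⟨0, hγ⟩‖ ^ 2 * ((B ⟨0, hγ⟩).card : ℝ))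
    (hmass : ‖b ⟨0, hγ⟩‖ ^ 2 * ((B ⟨0, hγ⟩).card : ℝ) = ‖a ⟨0, hγ⟩‖ ^ 2 * ((A ⟨0, hγ⟩).card : ℝ))
    (S : Finset (Fin d → ZMod N)) (hS : ∀ m ∉ S, ft g m = ft f m)
    (hAS : ((A ⟨0, hγ⟩).card : ℝ) * S.card
      < (N : ℝ) ^ d / (4 * ((γ : ℝ) ^ 2 + 2 * γ)) * (δ / M) ^ 2)
    (hBS : ((B ⟨0, hγ⟩).card : ℝ) * S.card
      < (N : ℝ) ^ d / (4 * ((γ : ℝ) ^ 2 + 2 * γ)) * (δ / M) ^ 2) :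
    g = f := by
  classical
  by_contra hne
  set h : (Fin d → ZMod N) → ℂ := fun x => g x - f x with hh_def
  obtain ⟨z, hz⟩ : ∃ z, h z ≠ 0 := by
    by_contra hc
    push_neg at hc
    exact hne (funext fun x => sub_eq_zero.mp (hc x))
  -- norms of exponentials
  have hexp1 : ∀ (t : ℕ), ‖Complex.exp (-(2 * Real.pi * Complex.I * (t : ℂ) / N))‖ = 1 := by
    intro t
    have he : (-(2 * Real.pi * Complex.I * (t : ℂ) / N)) =
        ((-(2 * Real.pi * t / N) : ℝ) : ℂ) * Complex.I := by push_cast; ring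
    rw [he, Complex.norm_exp_ofReal_mul_I]
  have hexp2 : ∀ (t : ℕ), ‖Complex.exp (2 * Real.pi * Complex.I * (t : ℂ) / N)‖ = 1 := by
    intro t
    have he : ((2 * Real.pi * Complex.I * (t : ℂ) / N)) =
        (((2 * Real.pi * t / N) : ℝ) : ℂ) * Complex.I := by push_cast; ring
    rw [he, Complex.norm_exp_ofReal_mul_I]
  have hNd : (0 : ℝ) < (N : ℝ) ^ d :=
    pow_pos (Nat.cast_pos.mpr (Nat.pos_of_ne_zero (NeZero.ne N))) d
  -- ft of h vanishes off S
  have hft : ∀ m, ft h m = ft g m - ft f m := by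
    intro m
    rw [ft, ft, ft, ← mul_sub, ← Finset.sum_sub_distrib]
    congr 1
    refine Finset.sum_congr rfl fun y _ => ?_
    have hy : h y = g y - f y := rfl
    rw [hy, mul_sub]
  have hvanish : ∀ m ∉ S, ft h m = 0 := fun m hm => by
    rw [hft, hS m hm, sub_self]
  -- maximum of ‖h‖
  have hne' : (Finset.univ : Finset (Fin d → ZMod N)).Nonempty := ⟨fun _ => 0, mem_univ _⟩
  obtain ⟨x₀, -, hx₀⟩ := Finset.exists_max_image Finset.univ (fun x => ‖h x‖) hne'
  set C : ℝ := ‖h x₀‖ with hC_def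
  have hCpos : 0 < C := lt_of_lt_of_le (norm_pos_iff.mpr hz) (hx₀ z (mem_univ z))
  set T : Finset (Fin d → ZMod N) := Finset.univ.filter (fun x => h x ≠ 0) with hT_def
  -- bound on ft h
  have hftb : ∀ m, ‖ft h m‖ ≤ ((N : ℝ) ^ d)⁻¹ * ((T.card : ℝ) * C) := by
    intro m
    rw [ft, norm_mul, norm_inv, norm_pow, Complex.norm_natCast]
    refine mul_le_mul_of_nonneg_left ?_ (by positivity)
    calc ‖∑ x : Fin d → ZMod N,
          Complex.exp (-(2 * Real.pi * Complex.I * ((∑ i, x i * m i).val : ℂ) / N)) * h x‖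
        ≤ ∑ x : Fin d → ZMod N, ‖Complex.exp
            (-(2 * Real.pi * Complex.I * ((∑ i, x i * m i).val : ℂ) / N)) * h x‖ :=
          norm_sum_le _ _
      _ = ∑ x : Fin d → ZMod N, ‖h x‖ := by
          refine Finset.sum_congr rfl fun x _ => ?_
          rw [norm_mul, hexp1, one_mul]
      _ = ∑ x ∈ T, ‖h x‖ := by
          refine (Finset.sum_subset (Finset.filter_subset _ _) fun x _ hx => ?_).symm
          simp only [hT_def, Finset.mem_filter, not_and, not_not] at hx
          rw [hx (mem_univ x), norm_zero]
      _ ≤ ∑ _x ∈ T, C := Finset.sum_le_sum fun x _ => hx₀ x (mem_univ x)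
      _ = (T.card : ℝ) * C := by rw [Finset.sum_const, nsmul_eq_mul]
  -- uncertainty: N^d ≤ |S| |T|
  have huncert : (N : ℝ) ^ d ≤ (S.card : ℝ) * (T.card : ℝ) := by
    have hinv := Stmt10Aux.inversion h x₀
    have hCle : C ≤ (S.card : ℝ) * (((N : ℝ) ^ d)⁻¹ * ((T.card : ℝ) * C)) := by
      calc C = ‖∑ m : Fin d → ZMod N, ch x₀ m * ft h m‖ := by rw [hinv]
        _ = ‖∑ m ∈ S, ch x₀ m * ft h m‖ := by
            congr 1
            refine (Finset.sum_subset (Finset.subset_univ S) fun m _ hm => ?_).symm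
            rw [hvanish m hm, mul_zero]
        _ ≤ ∑ m ∈ S, ‖ch x₀ m * ft h m‖ := norm_sum_le _ _
        _ ≤ ∑ _m ∈ S, ((N : ℝ) ^ d)⁻¹ * ((T.card : ℝ) * C) := by
            refine Finset.sum_le_sum fun m _ => ?_
            rw [norm_mul, ch, hexp2, one_mul]
            exact hftb m
        _ = (S.card : ℝ) * (((N : ℝ) ^ d)⁻¹ * ((T.card : ℝ) * C)) := by
            rw [Finset.sum_const, nsmul_eq_mul]
    have h1 : 1 ≤ (S.card : ℝ) * (((N : ℝ) ^ d)⁻¹ * (T.card : ℝ)) := by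
      have h' : 1 * C ≤ ((S.card : ℝ) * (((N : ℝ) ^ d)⁻¹ * (T.card : ℝ))) * C := by
        rw [one_mul]
        calc C ≤ (S.card : ℝ) * (((N : ℝ) ^ d)⁻¹ * ((T.card : ℝ) * C)) := hCle
          _ = ((S.card : ℝ) * (((N : ℝ) ^ d)⁻¹ * (T.card : ℝ))) * C := by ring
      exact le_of_mul_le_mul_right h' hCpos
    have h2 := mul_le_mul_of_nonneg_left h1 (le_of_lt hNd)
    rw [mul_one] at h2
    calc (N : ℝ) ^ d ≤ (N : ℝ) ^ d * ((S.card : ℝ) * (((N : ℝ) ^ d)⁻¹ * (T.card : ℝ))) := h2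
      _ = (S.card : ℝ) * (T.card : ℝ) := by
          rw [← mul_assoc, ← mul_assoc, mul_comm ((N:ℝ)^d) (S.card : ℝ), mul_assoc (S.card : ℝ),
            mul_inv_cancel₀ (ne_of_gt hNd), mul_one]
  -- counting bound on |T|
  set A1 : ℝ := ((A ⟨0, hγ⟩).card : ℝ) with hA1_def
  have hA1nn : 0 ≤ A1 := Nat.cast_nonneg _
  have hmassA : ‖a ⟨0, hγ⟩‖ ^ 2 * A1 ≤ M ^ 2 * A1 := by
    refine mul_le_mul_of_nonneg_right ?_ hA1nn
    have := hbd _ (ha ⟨0, hγ⟩)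
    nlinarith [norm_nonneg (a ⟨0, hγ⟩)]
  have hcard : ∀ (c : Fin γ → ℂ) (D : Fin γ → Finset (Fin d → ZMod N)),
      (∀ i, c i ∈ α) →
      (∀ i, ‖c i‖ ^ 2 * ((D i).card : ℝ) ≤ M ^ 2 * A1) →
      (((Finset.univ.filter (fun x => (∑ i, if x ∈ D i then c i else 0) ≠ 0)).card : ℝ)
        ≤ (γ : ℝ) * (M ^ 2 * A1 / δ ^ 2)) := by
    intro c D hcα hcD
    have hsub : (Finset.univ.filter (fun x => (∑ i, if x ∈ D i then c i else 0) ≠ 0))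
        ⊆ Finset.univ.biUnion (fun i => if c i = 0 then ∅ else D i) := by
      intro x hx
      rw [Finset.mem_filter] at hx
      obtain ⟨i, hxi, hci⟩ : ∃ i, x ∈ D i ∧ c i ≠ 0 := by
        by_contra hcon
        push_neg at hcon
        refine hx.2 (Finset.sum_eq_zero fun i _ => ?_)
        by_cases hxd : x ∈ D i
        · rw [if_pos hxd, hcon i hxd]
        · rw [if_neg hxd]
      exact Finset.mem_biUnion.mpr ⟨i, mem_univ i, by rw [if_neg hci]; exact hxi⟩
    calc (((Finset.univ.filter (fun x => (∑ i, if x ∈ D i then c i else 0) ≠ 0)).card : ℝ))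
        ≤ (((Finset.univ.biUnion (fun i => if c i = 0 then ∅ else D i)).card : ℝ)) := by
          exact_mod_cast Finset.card_le_card hsub
      _ ≤ ((∑ i, (if c i = 0 then (∅ : Finset (Fin d → ZMod N)) else D i).card : ℕ) : ℝ) := by
          exact_mod_cast Finset.card_biUnion_le
      _ = ∑ i, ((if c i = 0 then (∅ : Finset (Fin d → ZMod N)) else D i).card : ℝ) := by
          push_cast; ring
      _ ≤ ∑ _i : Fin γ, M ^ 2 * A1 / δ ^ 2 := by
          refine Finset.sum_le_sum fun i _ => ?_
          by_cases hci : c i = 0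
          · rw [if_pos hci]
            simp only [Finset.card_empty, Nat.cast_zero]
            positivity
          · rw [if_neg hci]
            have hδi : δ ≤ ‖c i‖ := by
              have := hsep (c i) (hcα i) 0 h0 hci
              simpa using this
            have h2 : δ ^ 2 * ((D i).card : ℝ) ≤ M ^ 2 * A1 := by
              refine le_trans ?_ (hcD i)
              refine mul_le_mul_of_nonneg_right ?_ (Nat.cast_nonneg _)
              nlinarith
            rw [le_div_iff₀ (by positivity)]
            linarith [h2]
      _ = (γ : ℝ) * (M ^ 2 * A1 / δ ^ 2) := by
          rw [Finset.sum_const, nsmul_eq_mul]; simp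
  have hTA : (T.card : ℝ) ≤ 2 * (γ : ℝ) * (M ^ 2 * A1 / δ ^ 2) := by
    have hsubT : T ⊆ (Finset.univ.filter (fun x => (∑ j, if x ∈ B j then b j else 0) ≠ 0))
        ∪ (Finset.univ.filter (fun x => (∑ i, if x ∈ A i then a i else 0) ≠ 0)) := by
      intro x hx
      rw [hT_def, Finset.mem_filter] at hx
      rw [Finset.mem_union, Finset.mem_filter, Finset.mem_filter]
      by_contra hcon
      push_neg at hcon
      have h1 := hcon.1 (mem_univ x)
      have h2 := hcon.2 (mem_univ x)
      refine hx.2 ?_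
      show g x - f x = 0
      rw [hg, hf, h1, h2, sub_self]
    have hcardB := hcard b B hb (fun j => le_trans (le_trans (heffB j) hmass.le) hmassA)
    have hcardA := hcard a A ha (fun i => le_trans (heffA i) hmassA)
    calc (T.card : ℝ) ≤ (((Finset.univ.filter (fun x => (∑ j, if x ∈ B j then b j else 0) ≠ 0))
          ∪ (Finset.univ.filter (fun x => (∑ i, if x ∈ A i then a i else 0) ≠ 0))).card : ℝ) := by
          exact_mod_cast Finset.card_le_card hsubT
      _ ≤ (((Finset.univ.filter (fun x => (∑ j, if x ∈ B j then b j else 0) ≠ 0)).card : ℝ))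
          + (((Finset.univ.filter (fun x => (∑ i, if x ∈ A i then a i else 0) ≠ 0)).card : ℝ)) := by
          exact_mod_cast Finset.card_union_le _ _
      _ ≤ 2 * (γ : ℝ) * (M ^ 2 * A1 / δ ^ 2) := by linarith
  -- final contradiction
  have hγ1 : (1 : ℝ) ≤ (γ : ℝ) := by exact_mod_cast hγ
  have hScard : (0 : ℝ) ≤ (S.card : ℝ) := Nat.cast_nonneg _
  have hkey : (N : ℝ) ^ d ≤ (S.card : ℝ) * (2 * (γ : ℝ) * (M ^ 2 * A1 / δ ^ 2)) :=
    le_trans huncert (mul_le_mul_of_nonneg_left hTA hScard)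
  have hgpos : (0 : ℝ) < 4 * ((γ : ℝ) ^ 2 + 2 * γ) := by nlinarith
  have hAS' : A1 * (S.card : ℝ) * (4 * ((γ : ℝ) ^ 2 + 2 * γ)) * M ^ 2 < (N : ℝ) ^ d * δ ^ 2 := by
    have hpos : (0 : ℝ) < 4 * ((γ : ℝ) ^ 2 + 2 * γ) * M ^ 2 := by positivity
    calc A1 * (S.card : ℝ) * (4 * ((γ : ℝ) ^ 2 + 2 * γ)) * M ^ 2
        = (A1 * (S.card : ℝ)) * (4 * ((γ : ℝ) ^ 2 + 2 * γ) * M ^ 2) := by ring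
      _ < ((N : ℝ) ^ d / (4 * ((γ : ℝ) ^ 2 + 2 * γ)) * (δ / M) ^ 2)
          * (4 * ((γ : ℝ) ^ 2 + 2 * γ) * M ^ 2) := mul_lt_mul_of_pos_right hAS hpos
      _ = (N : ℝ) ^ d * δ ^ 2 := by
          field_simp
  have hkey2 : (N : ℝ) ^ d * δ ^ 2 ≤ 2 * (γ : ℝ) * M ^ 2 * (A1 * (S.card : ℝ)) := by
    have hd2 : (0 : ℝ) < δ ^ 2 := by positivity
    calc (N : ℝ) ^ d * δ ^ 2
        ≤ ((S.card : ℝ) * (2 * (γ : ℝ) * (M ^ 2 * A1 / δ ^ 2))) * δ ^ 2 :=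
          mul_le_mul_of_nonneg_right hkey (le_of_lt hd2)
      _ = 2 * (γ : ℝ) * M ^ 2 * (A1 * (S.card : ℝ)) := by
          field_simp
  nlinarith [mul_nonneg (mul_nonneg hA1nn hScard) (sq_nonneg M),
    mul_nonneg hA1nn hScard, sq_nonneg M, hγ1]
end

section
/- Let S ⊂ Z_N^d satisfy a (p,q)-restriction estimate with constant C: (|S|^{-1} Σ_{m∈S} |ĝ(m)|^q)^{1/q} ≤ C N^{-d} (Σ_x |g(x)|^p)^{1/p} for all g. Let f be a Dirac comb of complexity γ with values of modulus ≤ M and coefficient gaps ≥ δ, satisfying Σ_x |f(x)|^p ≤ γ Σ_{x∈A_1} |f(x)|^p. If |A_1|^{1/p}·|S| < (N^d/(2Cγ^{1/p}))·(δ/M), then |Σ_{m∈S} e^{2πi x·m/N} f̂(m)| < δ/2 for every x, and f is uniquely recoverable from {f̂(m)}_{m∉S} by rounding. -/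
open Finset

namespace Stmt14Aux

noncomputable def zeta (N : ℕ) : ℂ := Complex.exp (2 * Real.pi * Complex.I / N)

lemma zeta_prim (N : ℕ) [NeZero N] : IsPrimitiveRoot (zeta N) N :=
  Complex.isPrimitiveRoot_exp N (NeZero.ne N)

lemma zeta_pow_self (N : ℕ) [NeZero N] : zeta N ^ N = 1 := (zeta_prim N).pow_eq_one

lemma zeta_ne_zero (N : ℕ) : zeta N ≠ 0 := Complex.exp_ne_zero _

noncomputable def E (N : ℕ) (k : ZMod N) : ℂ := zeta N ^ k.val

lemma E_ne_zero (N : ℕ) (k : ZMod N) : E N k ≠ 0 := pow_ne_zero _ (zeta_ne_zero N)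

lemma cast_val {N : ℕ} [NeZero N] (a : ZMod N) : ((a.val : ℕ) : ZMod N) = a :=
  ZMod.natCast_rightInverse a

lemma E_natCast (N : ℕ) [NeZero N] (n : ℕ) : E N (n : ZMod N) = zeta N ^ n := by
  rw [E, ZMod.val_natCast, ← pow_eq_pow_mod n (zeta_pow_self N)]

lemma E_zero (N : ℕ) : E N 0 = 1 := by simp [E]

lemma E_add {N : ℕ} [NeZero N] (a b : ZMod N) : E N (a + b) = E N a * E N b := by
  rw [show a + b = ((a.val + b.val : ℕ) : ZMod N) by rw [Nat.cast_add, cast_val, cast_val],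
    E_natCast, pow_add, E, E]

lemma E_sub {N : ℕ} [NeZero N] (a b : ZMod N) : E N (a - b) = E N a * (E N b)⁻¹ := by
  have h : E N (a - b) * E N b = E N a := by rw [← E_add, sub_add_cancel]
  field_simp [E_ne_zero N b, ← h]
  exact h

lemma E_sum {N : ℕ} [NeZero N] {ι : Type*} (s : Finset ι) (g : ι → ZMod N) :
    E N (∑ i ∈ s, g i) = ∏ i ∈ s, E N (g i) := by
  classical
  induction s using Finset.cons_induction with
  | empty => simp [E_zero]
  | cons i s hi ih => rw [Finset.sum_cons, Finset.prod_cons, E_add, ih]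

lemma sum_E {N : ℕ} [NeZero N] (c : ZMod N) :
    ∑ k : ZMod N, E N (c * k) = if c = 0 then (N : ℂ) else 0 := by
  have key : ∀ k : ZMod N, E N (c * k) = (zeta N ^ c.val) ^ k.val := by
    intro k
    rw [show c * k = ((c.val * k.val : ℕ) : ZMod N) by
      rw [Nat.cast_mul, cast_val, cast_val], E_natCast, pow_mul]
  have hbij : ∑ k : ZMod N, (zeta N ^ c.val) ^ k.val
      = ∑ j ∈ Finset.range N, (zeta N ^ c.val) ^ j := by
    refine Finset.sum_nbij' (fun k => k.val) (fun n => (n : ZMod N)) ?_ ?_ ?_ ?_ ?_ <;>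
      intros <;>
      simp_all [ZMod.val_lt, cast_val, ZMod.val_natCast, Nat.mod_eq_of_lt]
  simp only [key, hbij]
  by_cases hc : c = 0
  · simp [hc]
  · rw [if_neg hc]
    have hz1 : zeta N ^ c.val ≠ 1 := by
      refine (zeta_prim N).pow_ne_one_of_pos_of_lt ?_ (ZMod.val_lt c)
      exact (ZMod.val_pos.mpr hc).ne'
    have hzN : (zeta N ^ c.val) ^ N = 1 := by
      rw [← pow_mul, mul_comm, pow_mul, zeta_pow_self, one_pow]
    rw [geom_sum_eq hz1, hzN, sub_self, zero_div]

lemma exp_eq_E {N d : ℕ} [NeZero N] (y m : Fin d → ZMod N) :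
    Complex.exp (2 * Real.pi * Complex.I * (((∑ i, y i * m i).val : ℕ) : ℂ) / N)
      = E N (∑ i, y i * m i) := by
  rw [E, zeta, ← Complex.exp_nat_mul]
  congr 1
  ring

lemma orth {N d : ℕ} [NeZero N] (c : Fin d → ZMod N) :
    ∑ m : Fin d → ZMod N, E N (∑ i, c i * m i)
      = if c = 0 then ((N : ℂ) ^ d) else 0 := by
  classical
  have h1 : ∑ m : Fin d → ZMod N, E N (∑ i, c i * m i)
      = ∏ i, ∑ k : ZMod N, E N (c i * k) := by
    rw [Fintype.prod_sum (f := fun i k => E N (c i * k))]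
    exact Finset.sum_congr rfl fun m _ => E_sum _ _
  rw [h1]
  by_cases hc : c = 0
  · simp [hc, sum_E, E_zero, Finset.prod_const]
  · rw [if_neg hc]
    obtain ⟨i, hi⟩ := Function.ne_iff.mp hc
    have hi' : c i ≠ 0 := by simpa using hi
    exact Finset.prod_eq_zero (Finset.mem_univ i) (by simp [sum_E, hi'])

lemma fourier_inv {N d : ℕ} [NeZero N] (f : (Fin d → ZMod N) → ℂ)
    (x : Fin d → ZMod N) :
    ∑ m : Fin d → ZMod N, ch x m * ft f m = f x := by
  classical
  have hNd : ((N : ℂ) ^ d) ≠ 0 := by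
    have : (N : ℂ) ≠ 0 := by exact_mod_cast Nat.cast_ne_zero.mpr (NeZero.ne N)
    exact pow_ne_zero _ this
  have step1 : ∀ m, ch x m * ft f m
      = ((N : ℂ) ^ d)⁻¹ * ∑ y, E N (∑ i, (x i - y i) * m i) * f y := by
    intro m
    unfold ch ft
    rw [mul_left_comm]
    congr 1
    rw [Finset.mul_sum]
    refine Finset.sum_congr rfl fun y _ => ?_
    rw [← mul_assoc]
    congr 1
    rw [Complex.exp_neg, exp_eq_E, exp_eq_E, ← E_sub]
    congr 1
    rw [← Finset.sum_sub_distrib]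
    exact Finset.sum_congr rfl fun i _ => by ring
  calc ∑ m : Fin d → ZMod N, ch x m * ft f m
      = ∑ m : Fin d → ZMod N,
          ((N : ℂ) ^ d)⁻¹ * ∑ y, E N (∑ i, (x i - y i) * m i) * f y :=
        Finset.sum_congr rfl fun m _ => step1 m
    _ = ((N : ℂ) ^ d)⁻¹ * ∑ y, (∑ m : Fin d → ZMod N,
          E N (∑ i, (x i - y i) * m i)) * f y := by
        rw [← Finset.mul_sum, Finset.sum_comm]
        congr 1
        exact Finset.sum_congr rfl fun y _ => by rw [Finset.sum_mul]
    _ = ((N : ℂ) ^ d)⁻¹ * ∑ y, (if (fun i => x i - y i) = 0 then ((N : ℂ) ^ d) else 0) * f y := by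
        congr 1
        exact Finset.sum_congr rfl fun y _ => by rw [orth]
    _ = f x := by
        have hiff : ∀ y : Fin d → ZMod N, ((fun i => x i - y i) = 0) ↔ x = y := by
          intro y
          constructor
          · intro h; funext i
            have := congrFun h i
            simpa [sub_eq_zero] using this
          · intro h; subst h; funext i; simp
        have : ∀ y : Fin d → ZMod N,
            (if (fun i => x i - y i) = 0 then ((N : ℂ) ^ d) else 0) * f y
            = if x = y then ((N : ℂ) ^ d) * f y else 0 := by
          intro y
          by_cases h : x = y
          · rw [if_pos ((hiff y).mpr h), if_pos h]
          · rw [if_neg (fun hh => h ((hiff y).mp hh)), if_neg h, zero_mul]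
        rw [Finset.sum_congr rfl fun y _ => this y, Finset.sum_ite_eq]
        simp [hNd]

end Stmt14Aux

open Stmt14Aux in
theorem stmt14 {N d γ : ℕ} [NeZero N] (hγ : 0 < γ)
    (δ M : ℝ) (hδ : 0 < δ) (hM : 0 < M)
    (α : Set ℂ) (h0 : (0 : ℂ) ∈ α)
    (hsep : ∀ z ∈ α, ∀ w ∈ α, z ≠ w → δ ≤ ‖z - w‖)
    (hbd : ∀ z ∈ α, ‖z‖ ≤ M)
    (a : Fin γ → ℂ) (A : Fin γ → Finset (Fin d → ZMod N))
    (ha : ∀ i, a i ∈ α)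
    (hA : ∀ i j, i ≠ j → Disjoint (A i) (A j))
    (f : (Fin d → ZMod N) → ℂ)
    (hf : ∀ x, f x = ∑ i, if x ∈ A i then a i else 0)
    (p q C : ℝ) (hp : 1 ≤ p) (hpq : p ≤ q)
    (S : Finset (Fin d → ZMod N))
    (hres : ∀ g : (Fin d → ZMod N) → ℂ,
      ((S.card : ℝ)⁻¹ * ∑ m ∈ S, ‖ft g m‖ ^ q) ^ (1 / q)
        ≤ C * ((N : ℝ) ^ d)⁻¹ * (∑ x : Fin d → ZMod N, ‖g x‖ ^ p) ^ (1 / p))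
    (A1 : Finset (Fin d → ZMod N))
    (heff : ∑ x : Fin d → ZMod N, ‖f x‖ ^ p ≤ (γ : ℝ) * ∑ x ∈ A1, ‖f x‖ ^ p)
    (hrec : ((A1.card : ℝ)) ^ (1 / p) * S.card
      < (N : ℝ) ^ d / (2 * C * (γ : ℝ) ^ (1 / p)) * (δ / M)) :
    ∀ x : Fin d → ZMod N,
      ‖∑ m ∈ S, ch x m * ft f m‖ < δ / 2 ∧
      (∀ z ∈ α, ‖z - ∑ m ∈ Sᶜ, ch x m * ft f m‖ < δ / 2 → z = f x) := by
  classical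
  -- basic positivity facts
  have hp0 : (0 : ℝ) < p := lt_of_lt_of_le one_pos hp
  have hq1 : (1 : ℝ) ≤ q := hp.trans hpq
  have hγR : (0 : ℝ) < (γ : ℝ) := by exact_mod_cast hγ
  have hγp : (0 : ℝ) < (γ : ℝ) ^ (1 / p) := Real.rpow_pos_of_pos hγR _
  have hNd : (0 : ℝ) < ((N : ℝ) ^ d) := by
    have : (0 : ℝ) < (N : ℝ) := by exact_mod_cast Nat.pos_of_ne_zero (NeZero.ne N)
    positivity
  -- C > 0
  have hL0 : (0 : ℝ) ≤ ((A1.card : ℝ)) ^ (1 / p) * S.card := by positivity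
  have hRpos : (0 : ℝ) < (N : ℝ) ^ d / (2 * C * (γ : ℝ) ^ (1 / p)) * (δ / M) :=
    lt_of_le_of_lt hL0 hrec
  have hC : 0 < C := by
    rcases mul_pos_iff.mp hRpos with ⟨h1, _⟩ | ⟨_, h2⟩
    · have hden : 0 < 2 * C * (γ : ℝ) ^ (1 / p) := by
        by_contra hle
        push_neg at hle
        have : (N : ℝ) ^ d / (2 * C * (γ : ℝ) ^ (1 / p)) ≤ 0 := div_nonpos_iff.mpr (Or.inl ⟨hNd.le, hle⟩)
        linarith
      nlinarith
    · exfalso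
      have : 0 < δ / M := div_pos hδ hM
      linarith
  -- f takes values in α
  have hfα : ∀ y, f y ∈ α := by
    intro y
    rw [hf y]
    by_cases hy : ∃ i, y ∈ A i
    · obtain ⟨i, hi⟩ := hy
      rw [Finset.sum_eq_single i]
      · simpa [hi] using ha i
      · intro j _ hj
        rw [if_neg]
        intro hyj
        exact (Finset.disjoint_left.mp (hA j i hj) hyj) hi
      · intro h; exact absurd (Finset.mem_univ i) h
    · push_neg at hy
      rw [Finset.sum_eq_zero fun i _ => by rw [if_neg (hy i)]]
      exact h0
  have hfM : ∀ y, ‖f y‖ ≤ M := fun y => hbd _ (hfα y)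
  intro x
  -- ‖ch x m‖ = 1
  have hch : ∀ m : Fin d → ZMod N, ‖ch x m‖ = 1 := by
    intro m
    unfold ch
    rw [show 2 * Real.pi * Complex.I * (((∑ i, x i * m i).val : ℕ) : ℂ) / N
        = ((2 * Real.pi * ((∑ i, x i * m i).val : ℕ) / N : ℝ) : ℂ) * Complex.I by
      push_cast; ring]
    exact Complex.norm_exp_ofReal_mul_I _
  -- Step A: triangle inequality
  have stepA : ‖∑ m ∈ S, ch x m * ft f m‖ ≤ ∑ m ∈ S, ‖ft f m‖ := by
    refine (norm_sum_le _ _).trans_eq ?_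
    exact Finset.sum_congr rfl fun m _ => by rw [norm_mul, hch, one_mul]
  -- Step B: power mean inequality
  have stepB : ∑ m ∈ S, ‖ft f m‖
      ≤ (S.card : ℝ) * (((S.card : ℝ)⁻¹ * ∑ m ∈ S, ‖ft f m‖ ^ q) ^ (1 / q)) := by
    rcases eq_or_ne S ∅ with hS | hS
    · simp [hS]
    · have hcard : (0 : ℝ) < (S.card : ℝ) := by
        exact_mod_cast Finset.card_pos.mpr (Finset.nonempty_iff_ne_empty.mpr hS)
      have hmean := Real.arith_mean_le_rpow_mean S (fun _ => (S.card : ℝ)⁻¹)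
        (fun m => ‖ft f m‖) (fun i _ => by positivity)
        (by rw [Finset.sum_const, nsmul_eq_mul]; field_simp)
        (fun i _ => norm_nonneg _) hq1
      have h1 : ∑ m ∈ S, (S.card : ℝ)⁻¹ * ‖ft f m‖ = (S.card : ℝ)⁻¹ * ∑ m ∈ S, ‖ft f m‖ := by
        rw [Finset.mul_sum]
      have h2 : ∑ m ∈ S, (S.card : ℝ)⁻¹ * ‖ft f m‖ ^ q
          = (S.card : ℝ)⁻¹ * ∑ m ∈ S, ‖ft f m‖ ^ q := by
        rw [Finset.mul_sum]
      rw [h1, h2] at hmean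
      calc ∑ m ∈ S, ‖ft f m‖
          = (S.card : ℝ) * ((S.card : ℝ)⁻¹ * ∑ m ∈ S, ‖ft f m‖) := by
            field_simp
        _ ≤ (S.card : ℝ) * (((S.card : ℝ)⁻¹ * ∑ m ∈ S, ‖ft f m‖ ^ q) ^ (1 / q)) :=
            mul_le_mul_of_nonneg_left hmean hcard.le
  -- Step D: bound on the p-norm of f
  have stepD : (∑ y : Fin d → ZMod N, ‖f y‖ ^ p) ^ (1 / p)
      ≤ (γ : ℝ) ^ (1 / p) * ((A1.card : ℝ) ^ (1 / p) * M) := by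
    have hA1 : ∑ y ∈ A1, ‖f y‖ ^ p ≤ (A1.card : ℝ) * M ^ p := by
      calc ∑ y ∈ A1, ‖f y‖ ^ p ≤ ∑ _y ∈ A1, M ^ p :=
            Finset.sum_le_sum fun y _ =>
              Real.rpow_le_rpow (norm_nonneg _) (hfM y) hp0.le
        _ = (A1.card : ℝ) * M ^ p := by rw [Finset.sum_const, nsmul_eq_mul]
    have h1 : ∑ y : Fin d → ZMod N, ‖f y‖ ^ p ≤ (γ : ℝ) * ((A1.card : ℝ) * M ^ p) :=
      heff.trans (mul_le_mul_of_nonneg_left hA1 hγR.le)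
    have h2 : (∑ y : Fin d → ZMod N, ‖f y‖ ^ p) ^ (1 / p)
        ≤ ((γ : ℝ) * ((A1.card : ℝ) * M ^ p)) ^ (1 / p) :=
      Real.rpow_le_rpow (Finset.sum_nonneg fun y _ => Real.rpow_nonneg (norm_nonneg _) _)
        h1 (by positivity)
    refine h2.trans_eq ?_
    rw [Real.mul_rpow hγR.le (by positivity), Real.mul_rpow (by positivity) (by positivity),
      one_div, Real.rpow_rpow_inv hM.le (ne_of_gt hp0)]
  -- Main estimate
  have main : ‖∑ m ∈ S, ch x m * ft f m‖ < δ / 2 := by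
    have hCN : (0 : ℝ) ≤ C * ((N : ℝ) ^ d)⁻¹ := by positivity
    have chain : ‖∑ m ∈ S, ch x m * ft f m‖
        ≤ (S.card : ℝ) * (C * ((N : ℝ) ^ d)⁻¹ *
            ((γ : ℝ) ^ (1 / p) * ((A1.card : ℝ) ^ (1 / p) * M))) := by
      refine stepA.trans (stepB.trans ?_)
      refine mul_le_mul_of_nonneg_left ?_ (Nat.cast_nonneg _)
      refine (hres f).trans ?_
      exact mul_le_mul_of_nonneg_left stepD hCN
    have hk : (0 : ℝ) < C * ((N : ℝ) ^ d)⁻¹ * ((γ : ℝ) ^ (1 / p) * M) := by positivity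
    have hmul := mul_lt_mul_of_pos_right hrec hk
    have heq1 : ((A1.card : ℝ)) ^ (1 / p) * (S.card : ℝ) *
        (C * ((N : ℝ) ^ d)⁻¹ * ((γ : ℝ) ^ (1 / p) * M))
        = (S.card : ℝ) * (C * ((N : ℝ) ^ d)⁻¹ *
            ((γ : ℝ) ^ (1 / p) * ((A1.card : ℝ) ^ (1 / p) * M))) := by ring
    have heq2 : (N : ℝ) ^ d / (2 * C * (γ : ℝ) ^ (1 / p)) * (δ / M) *
        (C * ((N : ℝ) ^ d)⁻¹ * ((γ : ℝ) ^ (1 / p) * M)) = δ / 2 := by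
      field_simp
    rw [heq1, heq2] at hmul
    exact lt_of_le_of_lt chain hmul
  refine ⟨main, ?_⟩
  -- Part 2: recovery
  intro z hz hclose
  have hinv := fourier_inv f x
  have hsplit : ∑ m ∈ Sᶜ, ch x m * ft f m = f x - ∑ m ∈ S, ch x m * ft f m := by
    have h := Finset.sum_add_sum_compl S (fun m => ch x m * ft f m)
    rw [hinv] at h
    linear_combination h
  by_contra hne
  have hsep' : δ ≤ ‖z - f x‖ := hsep z hz (f x) (hfα x) hne
  have hzf : z - f x = (z - ∑ m ∈ Sᶜ, ch x m * ft f m) - ∑ m ∈ S, ch x m * ft f m := by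
    rw [hsplit]; ring
  have : ‖z - f x‖ ≤ ‖z - ∑ m ∈ Sᶜ, ch x m * ft f m‖ + ‖∑ m ∈ S, ch x m * ft f m‖ := by
    rw [hzf]; exact norm_sub_le _ _
  linarith
end
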